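/- If d and d′ are (⊙,∨)-derivations on the standard MV-algebra I = [0,1], then their pointwise join d ∨ d′, defined by (d ∨ d′)(x) = max(d(x), d′(x)), is also an (⊙,∨)-derivation on I. -/
import Mathlib

/-- Łukasiewicz strong conjunction `x ⊙ y = max 0 (x + y - 1)` on the unit interval. -/
noncomputable def od (x y : unitInterval) : unitInterval :=
  ⟨max 0 (x.1 + y.1 - 1),
    ⟨le_max_left _ _, max_le zero_le_one (by have := x.2.2; have := y.2.2; linarith)⟩⟩

/-- Łukasiewicz strong disjunction `x ⊕ y = min 1 (x + y)` on the unit interval. -/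
noncomputable def op (x y : unitInterval) : unitInterval :=
  ⟨min 1 (x.1 + y.1),
    ⟨le_min zero_le_one (by have := x.2.1; have := y.2.1; linarith), min_le_left _ _⟩⟩

/-- `d` is an `(⊙,∨)`-derivation on the standard MV-algebra `[0,1]`:
`d (x ⊙ y) = (d x ⊙ y) ∨ (x ⊙ d y)` for all `x, y`. -/
def IsOdotDer (d : unitInterval → unitInterval) : Prop :=
  ∀ x y : unitInterval, d (od x y) = max (od (d x) y) (od x (d y))

lemma coe_max (a b : unitInterval) : ((max a b : unitInterval) : ℝ) = max a.1 b.1 := by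
  rcases le_total a b with h | h
  · rw [max_eq_right h, max_eq_right (Subtype.coe_le_coe.mpr h)]
  · rw [max_eq_left h, max_eq_left (Subtype.coe_le_coe.mpr h)]

lemma od_max_left (a b y : unitInterval) : od (max a b) y = max (od a y) (od b y) := by
  apply Subtype.ext
  rw [coe_max]
  simp only [od, coe_max]
  rcases le_total a.1 b.1 with h | h
  · rw [max_eq_right h, max_eq_right (max_le_max le_rfl (by linarith : a.1 + y.1 - 1 ≤ b.1 + y.1 - 1))]
  · rw [max_eq_left h, max_eq_left (max_le_max le_rfl (by linarith : b.1 + y.1 - 1 ≤ a.1 + y.1 - 1))]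

lemma od_max_right (a b x : unitInterval) : od x (max a b) = max (od x a) (od x b) := by
  apply Subtype.ext
  rw [coe_max]
  simp only [od, coe_max]
  rcases le_total a.1 b.1 with h | h
  · rw [max_eq_right h, max_eq_right (max_le_max le_rfl (by linarith : x.1 + a.1 - 1 ≤ x.1 + b.1 - 1))]
  · rw [max_eq_left h, max_eq_left (max_le_max le_rfl (by linarith : x.1 + b.1 - 1 ≤ x.1 + a.1 - 1))]

/-- the pointwise join of two (⊙,∨)-derivations is an
(⊙,∨)-derivation. -/
theorem stmt15 (d d' : unitInterval → unitInterval)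
    (hd : IsOdotDer d) (hd' : IsOdotDer d') :
    IsOdotDer (fun x => max (d x) (d' x)) := by
  intro x y
  simp only [hd x y, hd' x y, od_max_left, od_max_right]
  exact max_max_max_comm _ _ _ _
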